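/- arXiv:2005.04422 — 2 statements merged into one kernel-verified Lean document; each statement's English description precedes it below -/
import Mathlib

section
/- For every complex polynomial q in the three real variables x, y, z, the operator norm of the restriction of Q_{1/N}(q(x,y,z)·(x²+y²+z²−1)) to the symmetric subspace Sym^N(ℂ²) tends to 0 as N → ∞. -/
open scoped ComplexConjugate
open MeasureTheory Filter Topology

noncomputable section

/-! ## Setting

`M₂(ℂ)^{⊗N}` is realized as matrices indexed by `Fin N → Fin 2`, acting on
`(ℂ²)^{⊗N} = EuclideanSpace ℂ (Fin N → Fin 2)`. -/

/-- `M₂(ℂ)^{⊗N}`, realized as matrices indexed by `Fin N → Fin 2`. -/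
abbrev TP (N : ℕ) : Type := Matrix (Fin N → Fin 2) (Fin N → Fin 2) ℂ

/-- The Pauli matrices `σ₁, σ₂, σ₃`. -/
def pauli : Fin 3 → Matrix (Fin 2) (Fin 2) ℂ
  | 0 => !![0, 1; 1, 0]
  | 1 => !![0, -Complex.I; Complex.I, 0]
  | 2 => !![1, 0; 0, -1]

/-- The symmetrization operator `S_N` on `M₂(ℂ)^{⊗N}`: the average over all permutations
of the tensor factors. -/
def symmMat (N : ℕ) (A : TP N) : TP N :=
  (N.factorial : ℂ)⁻¹ • ∑ σ : Equiv.Perm (Fin N), Matrix.of fun i j => A (i ∘ σ) (j ∘ σ)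

/-- `b ⊗ I₂^{⊗(N−M)}` (junk value `0` if `M > N`). -/
def embedMat (M N : ℕ) (b : TP M) : TP N :=
  if h : M ≤ N then
    Matrix.of fun i j =>
      b (fun k => i (Fin.castLE h k)) (fun k => j (Fin.castLE h k)) *
        ∏ k ∈ Finset.univ.filter (fun k : Fin N => M ≤ (k : ℕ)),
          (if i k = j k then (1 : ℂ) else 0)
  else 0

/-- `S_{M,N}(b) = S_N(b ⊗ I₂^{⊗(N−M)})`. -/
def SMN (M N : ℕ) (b : TP M) : TP N := symmMat N (embedMat M N b)

/-- The elementary tensor `σ_{m 0} ⊗ ⋯ ⊗ σ_{m (L-1)}` as a matrix on `(ℂ²)^{⊗L}`. -/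
def pauliTensor {L : ℕ} (m : Fin L → Fin 3) : TP L :=
  Matrix.of fun i j => ∏ k, pauli (m k) (i k) (j k)

/-- For a monomial with exponents `d`, the list of its variable indices (first `d 0` copies
of `0`, then `d 1` copies of `1`, then `d 2` copies of `2`). -/
def monFun (d : Fin 3 →₀ ℕ) : Fin (d 0 + d 1 + d 2) → Fin 3 := fun k =>
  if (k : ℕ) < d 0 then 0 else if (k : ℕ) < d 0 + d 1 then 1 else 2

/-- Quantization of the monomial `x^{d 0} y^{d 1} z^{d 2}`:
`S_{L,N}(σ_{j₁} ⊗ ⋯ ⊗ σ_{j_L})` if `L ≤ N`, and `0` if `L > N`. -/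
def Qmon (N : ℕ) (d : Fin 3 →₀ ℕ) : TP N :=
  SMN (d 0 + d 1 + d 2) N (pauliTensor (monFun d))

/-- The quantization map `Q_{1/N}`: the linear extension of `Qmon` to all complex
polynomials in the three real variables `x, y, z`. -/
def Q (N : ℕ) (p : MvPolynomial (Fin 3) ℂ) : TP N :=
  ∑ d ∈ p.support, p.coeff d • Qmon N d

/-- The symmetric subspace `Sym^N(ℂ²) ⊆ (ℂ²)^{⊗N}` (the fixed points of the permutation
action, i.e. the range of the vector symmetrizer). -/
def SymSub (N : ℕ) : Submodule ℂ (EuclideanSpace ℂ (Fin N → Fin 2)) where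
  carrier := {v | ∀ σ : Equiv.Perm (Fin N), ∀ i, v (i ∘ σ) = v i}
  add_mem' := by
    intro a b ha hb σ i
    have : (a + b) (i ∘ σ) = a (i ∘ σ) + b (i ∘ σ) := rfl
    rw [this, ha σ i, hb σ i]; rfl
  zero_mem' := by intro σ i; rfl
  smul_mem' := by
    intro c v hv σ i
    have : (c • v) (i ∘ σ) = c • (v (i ∘ σ)) := rfl
    rw [this, hv σ i]; rfl

/-- The vector symmetrizer. -/
def symVec (N : ℕ) (v : EuclideanSpace ℂ (Fin N → Fin 2)) :
    EuclideanSpace ℂ (Fin N → Fin 2) :=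
  WithLp.toLp 2 fun i => (N.factorial : ℂ)⁻¹ * ∑ σ : Equiv.Perm (Fin N), v (i ∘ σ)

lemma symVec_mem (N : ℕ) (v : EuclideanSpace ℂ (Fin N → Fin 2)) :
    symVec N v ∈ SymSub N := by
  intro τ i
  show (N.factorial : ℂ)⁻¹ * ∑ σ : Equiv.Perm (Fin N), v ((i ∘ τ) ∘ σ)
      = (N.factorial : ℂ)⁻¹ * ∑ σ : Equiv.Perm (Fin N), v (i ∘ σ)
  congr 1
  exact Fintype.sum_equiv (Equiv.mulLeft τ) _ _ (fun σ => by rfl)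

/-- The vector symmetrizer as a linear map onto the symmetric subspace. -/
def symProj (N : ℕ) : EuclideanSpace ℂ (Fin N → Fin 2) →ₗ[ℂ] SymSub N where
  toFun v := ⟨symVec N v, symVec_mem N v⟩
  map_add' v w := by
    apply Subtype.ext
    apply PiLp.ext; intro i
    show (N.factorial : ℂ)⁻¹ * ∑ σ : Equiv.Perm (Fin N), (v + w) (i ∘ σ) = _
    have h : ∀ σ : Equiv.Perm (Fin N), (v + w) (i ∘ σ) = v (i ∘ σ) + w (i ∘ σ) :=
      fun _ => rfl
    simp only [h, Finset.sum_add_distrib]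
    show _ = (N.factorial : ℂ)⁻¹ * (∑ σ : Equiv.Perm (Fin N), v (i ∘ σ))
        + (N.factorial : ℂ)⁻¹ * (∑ σ : Equiv.Perm (Fin N), w (i ∘ σ))
    ring
  map_smul' c v := by
    apply Subtype.ext
    apply PiLp.ext; intro i
    show (N.factorial : ℂ)⁻¹ * ∑ σ : Equiv.Perm (Fin N), (c • v) (i ∘ σ) = _
    have h : ∀ σ : Equiv.Perm (Fin N), (c • v) (i ∘ σ) = c * v (i ∘ σ) := fun _ => rfl
    simp only [h, ← Finset.mul_sum]
    show _ = c * ((N.factorial : ℂ)⁻¹ * (∑ σ : Equiv.Perm (Fin N), v (i ∘ σ)))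
    ring

/-- The restriction (compression) of a matrix `A` on `(ℂ²)^{⊗N}` to the symmetric subspace
`Sym^N(ℂ²)`, as a continuous linear operator; when `A` leaves `Sym^N(ℂ²)` invariant (as do
all operators considered here) this is exactly the restriction `A|_{Sym^N(ℂ²)}`. -/
def restrSym (N : ℕ) (A : TP N) : SymSub N →L[ℂ] SymSub N :=
  LinearMap.toContinuousLinearMap
    ((symProj N) ∘ₗ (Matrix.toEuclideanLin A) ∘ₗ (SymSub N).subtype)

/-- The unit sphere `S² ⊂ ℝ³`. -/
abbrev S2 : Type := Metric.sphere (0 : EuclideanSpace ℝ (Fin 3)) 1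

/-- Spherical coordinates `(θ, φ) ↦ (sin θ cos φ, sin θ sin φ, cos θ)`. -/
def sphCoord (a : ℝ × ℝ) : EuclideanSpace ℝ (Fin 3) :=
  WithLp.toLp 2 ![Real.sin a.1 * Real.cos a.2, Real.sin a.1 * Real.sin a.2, Real.cos a.1]

lemma sphCoord_mem (a : ℝ × ℝ) :
    sphCoord a ∈ Metric.sphere (0 : EuclideanSpace ℝ (Fin 3)) 1 := by
  have h : ‖sphCoord a‖ = 1 := by
    rw [EuclideanSpace.norm_eq]
    have : ∑ i : Fin 3, sphCoord a i ^ 2 = 1 := by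
      have hs := Real.sin_sq_add_cos_sq a.1
      have hc := Real.sin_sq_add_cos_sq a.2
      simp [sphCoord, Fin.sum_univ_three]
      nlinarith [hs, hc]
    have h2 : ∀ i : Fin 3, ‖sphCoord a i‖ ^ 2 = sphCoord a i ^ 2 := fun i => sq_abs _
    simp only [h2, this]
    exact Real.sqrt_one
  simpa [mem_sphere_iff_norm] using h

/-- The standard surface measure `dΩ` on `S²` (of total mass `4π`), realized as the
push-forward of `sin θ dθ dφ` on `[0,π] × (−π,π]` under spherical coordinates. -/
def μS2 : Measure S2 :=
  Measure.map (fun a : ℝ × ℝ => (⟨sphCoord a, sphCoord_mem a⟩ : S2))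
    (((volume : Measure (ℝ × ℝ)).restrict
        (Set.Icc (0 : ℝ) Real.pi ×ˢ Set.Ioc (-Real.pi) Real.pi)).withDensity
      fun a => ENNReal.ofReal (Real.sin a.1))

/-- The polar angle `θ ∈ [0, π]` of a point of `S²`. -/
def thetaOf (Ω : S2) : ℝ := Real.arccos ((Ω : EuclideanSpace ℝ (Fin 3)) 2)

/-- The azimuthal angle `φ ∈ (−π, π]` of a point of `S²`. -/
def phiOf (Ω : S2) : ℝ :=
  Complex.arg (((Ω : EuclideanSpace ℝ (Fin 3)) 0 : ℂ) +
    ((Ω : EuclideanSpace ℝ (Fin 3)) 1 : ℂ) * Complex.I)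

/-- The coherent spin state `|Ω⟩₁ = cos(θ/2) e₁ + e^{iφ} sin(θ/2) e₂ ∈ ℂ²`. -/
def cs1 (Ω : S2) : Fin 2 → ℂ :=
  ![(Real.cos (thetaOf Ω / 2) : ℂ),
    Complex.exp (Complex.I * (phiOf Ω : ℂ)) * (Real.sin (thetaOf Ω / 2) : ℂ)]

/-- The `N`-fold coherent spin state `|Ω⟩_N = |Ω⟩₁^{⊗N} ∈ (ℂ²)^{⊗N}`. -/
def csN (N : ℕ) (Ω : S2) : EuclideanSpace ℂ (Fin N → Fin 2) :=
  WithLp.toLp 2 fun i => ∏ k, cs1 Ω (i k)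

/-- The matrix of the weak integral `((N+1)/(4π)) ∫_{S²} f(Ω) |Ω⟩⟨Ω|_N dΩ` on `(ℂ²)^{⊗N}`
(entrywise Bochner integral, which in finite dimension coincides with the weak integral). -/
def Q'mat (N : ℕ) (f : S2 → ℂ) : TP N :=
  Matrix.of fun i j =>
    ((N + 1 : ℂ) / (4 * (Real.pi : ℂ))) * ∫ Ω, f Ω * csN N Ω i * conj (csN N Ω j) ∂μS2

/-- The coherent-state (Berezin) quantization map `Q'_{1/N}`, as an operator on
`Sym^N(ℂ²)` (the range of `|Ω⟩⟨Ω|_N` lies in `Sym^N(ℂ²)`, so the compression coincides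
with the operator defined by the weak integral). -/
def Q' (N : ℕ) (f : S2 → ℂ) : SymSub N →L[ℂ] SymSub N := restrSym N (Q'mat N f)

/-- The restriction of a polynomial (in three real variables) to the unit sphere `S²`. -/
def restrictS2 (p : MvPolynomial (Fin 3) ℂ) : S2 → ℂ :=
  fun Ω => MvPolynomial.eval (fun i => ((Ω : EuclideanSpace ℝ (Fin 3)) i : ℂ)) p

/-- The restriction to `S²` as a linear map. -/
def restrictS2Lin : MvPolynomial (Fin 3) ℂ →ₗ[ℂ] (S2 → ℂ) where
  toFun := restrictS2
  map_add' p q := by funext Ω; simp [restrictS2]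
  map_smul' c p := by funext Ω; simp [restrictS2]

/-- `P_N(S²)`: the space of restrictions to `S²` of complex polynomials of degree `≤ N`
in three real variables. -/
def PNS2 (N : ℕ) : Submodule ℂ (S2 → ℂ) where
  carrier := {g | ∃ p : MvPolynomial (Fin 3) ℂ, p.totalDegree ≤ N ∧ g = restrictS2 p}
  add_mem' := by
    rintro a b ⟨p, hp, rfl⟩ ⟨q, hq, rfl⟩
    exact ⟨p + q, le_trans (MvPolynomial.totalDegree_add p q) (by omega),
      by funext Ω; simp [restrictS2]⟩
  zero_mem' := ⟨0, by simp, by funext Ω; simp [restrictS2]⟩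
  smul_mem' := by
    rintro c a ⟨p, hp, rfl⟩
    exact ⟨c • p, le_trans (MvPolynomial.totalDegree_smul_le c p) hp,
      by funext Ω; simp [restrictS2]⟩

/-- The `N`-fold tensor power `U^{⊗N}` of a `2×2` matrix, on `(ℂ²)^{⊗N}`. -/
def tpow (N : ℕ) (U : Matrix (Fin 2) (Fin 2) ℂ) : TP N :=
  Matrix.of fun i j => ∏ k, U (i k) (j k)

/-- `σ_k(j) = I₂ ⊗ ⋯ ⊗ σ_k ⊗ ⋯ ⊗ I₂` with the Pauli matrix `σ_k` in the `j`-th slot. -/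
def pauliAt (N : ℕ) (k : Fin 3) (j : Fin N) : TP N :=
  Matrix.of fun a b =>
    pauli k (a j) (b j) *
      ∏ t ∈ Finset.univ.filter (fun t : Fin N => t ≠ j), (if a t = b t then (1 : ℂ) else 0)

/-- The quantum Curie–Weiss Hamiltonian
`h^{CW}_{1/N} = (1/N)( −(J/(2N)) Σ_{i,j} σ₃(i)σ₃(j) − B Σ_j σ₁(j))`. -/
def hCW (J B : ℝ) (N : ℕ) : TP N :=
  ((N : ℂ))⁻¹ • ((-(J / (2 * N)) : ℂ) • ∑ i : Fin N, ∑ j : Fin N,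
      pauliAt N 2 i * pauliAt N 2 j
    + (-(B : ℂ)) • ∑ j : Fin N, pauliAt N 0 j)

open scoped Classical in
/-- The action of a (special orthogonal) matrix on the unit sphere `S²`
(junk value if the image does not lie on the sphere). -/
def rotAct (R : Matrix (Fin 3) (Fin 3) ℝ) (Ω : S2) : S2 :=
  if h : (WithLp.toLp 2 (R.mulVec (Ω : EuclideanSpace ℝ (Fin 3))) : EuclideanSpace ℝ (Fin 3)) ∈
      Metric.sphere (0 : EuclideanSpace ℝ (Fin 3)) 1
  then ⟨WithLp.toLp 2 (R.mulVec (Ω : EuclideanSpace ℝ (Fin 3))), h⟩ else Ω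

/-- A polynomial in three variables is harmonic if its Laplacian vanishes. -/
def IsHarmonic (p : MvPolynomial (Fin 3) ℂ) : Prop :=
  ∑ i : Fin 3, MvPolynomial.pderiv i (MvPolynomial.pderiv i p) = 0

/-- The polynomial `x² + y² + z² − 1`. -/
def sphPoly : MvPolynomial (Fin 3) ℂ :=
  MvPolynomial.X 0 ^ 2 + MvPolynomial.X 1 ^ 2 + MvPolynomial.X 2 ^ 2 - 1

/-- The Dicke state `|k, N−k⟩ ∈ Sym^N(ℂ²)`: `binom(N,k)^{-1/2}` times the sum of all
elementary tensors with exactly `k` factors `e₂` (and `N−k` factors `e₁`). -/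
def dicke (N k : ℕ) : EuclideanSpace ℂ (Fin N → Fin 2) :=
  WithLp.toLp 2 fun i => if (Finset.univ.filter fun t => i t = 1).card = k
    then ((Real.sqrt (N.choose k) : ℂ))⁻¹ else 0

/-- The operator norm of a matrix acting on `(ℂ²)^{⊗N}` with its Euclidean (ℓ²) norm. -/
def matOpNorm {N : ℕ} (A : TP N) : ℝ :=
  ‖LinearMap.toContinuousLinearMap (Matrix.toEuclideanLin A)‖

/-! On `ℂ² ⊗ ℂ²` one has `∑ⱼ σⱼ ⊗ σⱼ = 2·SWAP − 1`, and permuting tensor factors acts trivially on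
`Sym^N(ℂ²)`. Hence, after compressing to the symmetric subspace, appending a pair `σⱼ ⊗ σⱼ` to a
product of Paulis and summing over `j` changes nothing (the pair can be moved to any two free
slots, since the compression ignores permutations of factors). For a monomial `m` of degree at
most `N − 2` this says `∑ⱼ Q_{1/N}(xⱼ² m) = Q_{1/N}(m)` on `Sym^N(ℂ²)`, so the compression of
`Q_{1/N}(q · (x² + y² + z² − 1))` vanishes identically as soon as `N ≥ deg q + 2`. -/

lemma Equiv.Perm.exists_comp_eq_of_map_univ_eq {α β : Type*} [Fintype α] {f g : α → β}
    (h : Finset.univ.val.map f = Finset.univ.val.map g) :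
    ∃ σ : Equiv.Perm α, g ∘ σ = f := by
  classical
  have hfiber : ∀ b, Fintype.card {a // f a = b} = Fintype.card {a // g a = b} := fun b => by
    simpa [Fintype.card_subtype, Multiset.count_map, Finset.card_def, eq_comm] using
      congrArg (Multiset.count b) h
  exact ⟨(Equiv.sigmaFiberEquiv f).symm.trans ((Equiv.sigmaCongrRight fun b =>
    Fintype.equivOfCardEq (hfiber b)).trans (Equiv.sigmaFiberEquiv g)),
    funext fun a => (Fintype.equivOfCardEq (hfiber (f a)) ⟨a, rfl⟩).2⟩

lemma sum_pauli_mul_pauli (a b c d : Fin 2) :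
    ∑ j, pauli j a b * pauli j c d =
      2 * ((1 : Matrix (Fin 2) (Fin 2) ℂ) a d * (1 : Matrix (Fin 2) (Fin 2) ℂ) c b) -
        (1 : Matrix (Fin 2) (Fin 2) ℂ) a b * (1 : Matrix (Fin 2) (Fin 2) ℂ) c d := by
  fin_cases a <;> fin_cases b <;> fin_cases c <;> fin_cases d <;>
    simp [pauli, Fin.sum_univ_three] <;> norm_num

section Compression

variable {N : ℕ}

lemma symVec_comp_perm (σ : Equiv.Perm (Fin N)) (w : EuclideanSpace ℂ (Fin N → Fin 2)) :
    symVec N (WithLp.toLp 2 fun i => w (i ∘ σ)) = symVec N w := by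
  ext i
  simp only [symVec, PiLp.toLp_apply]
  congr 1
  exact Fintype.sum_equiv (Equiv.mulRight σ) _ _ fun _ => rfl

lemma restrSym_eq_of_symVec_eq {A B : TP N}
    (h : ∀ v ∈ SymSub N, symVec N (Matrix.toEuclideanLin A v) =
      symVec N (Matrix.toEuclideanLin B v)) :
    restrSym N A = restrSym N B := by
  ext1 v
  exact Subtype.ext (h v v.2)

lemma restrSym_submatrix_comp_perm_left (σ : Equiv.Perm (Fin N)) (A : TP N) :
    restrSym N (A.submatrix (· ∘ σ) id) = restrSym N A :=
  restrSym_eq_of_symVec_eq fun v _ => symVec_comp_perm σ (Matrix.toEuclideanLin A v)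

lemma restrSym_submatrix_comp_perm_right (σ : Equiv.Perm (Fin N)) (A : TP N) :
    restrSym N (A.submatrix id (· ∘ σ)) = restrSym N A := by
  refine restrSym_eq_of_symVec_eq fun v hv => ?_
  congr 1
  ext i
  exact Fintype.sum_equiv (σ.symm.arrowCongr (Equiv.refl _)) _ _ fun m => by
    change _ = A i (m ∘ σ) * v (m ∘ σ)
    rw [hv σ m]
    rfl

lemma restrSym_submatrix_comp_perm (σ : Equiv.Perm (Fin N)) (A : TP N) :
    restrSym N (A.submatrix (· ∘ σ) (· ∘ σ)) = restrSym N A := by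
  have hsplit : A.submatrix (· ∘ σ) (· ∘ σ) = (A.submatrix (· ∘ σ) id).submatrix id (· ∘ σ) :=
    rfl
  rw [hsplit, restrSym_submatrix_comp_perm_right, restrSym_submatrix_comp_perm_left]

def restrSymₗ (N : ℕ) : TP N →ₗ[ℂ] (SymSub N →L[ℂ] SymSub N) where
  toFun := restrSym N
  map_add' A B := by
    simp only [restrSym, map_add, LinearMap.add_comp, LinearMap.comp_add]
  map_smul' c A := by
    simp only [restrSym, map_smul, LinearMap.smul_comp, LinearMap.comp_smul]
    rfl

@[simp] lemma restrSymₗ_apply (A : TP N) : restrSymₗ N A = restrSym N A := rfl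

lemma restrSym_symmMat (A : TP N) : restrSym N (symmMat N A) = restrSym N A := by
  have hsum : symmMat N A = (N.factorial : ℂ)⁻¹ • ∑ σ : Equiv.Perm (Fin N),
      A.submatrix (· ∘ σ) (· ∘ σ) := rfl
  rw [← restrSymₗ_apply, hsum, map_smul, map_sum]
  simp only [restrSymₗ_apply, restrSym_submatrix_comp_perm, Finset.sum_const, Finset.card_univ,
    Fintype.card_perm, Fintype.card_fin, ← Nat.cast_smul_eq_nsmul ℂ, smul_smul]
  rw [inv_mul_cancel₀ (by exact_mod_cast N.factorial_ne_zero), one_smul]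

end Compression

section Kron

variable {N : ℕ}

def kron (N : ℕ) (f : Fin N → Matrix (Fin 2) (Fin 2) ℂ) : TP N :=
  Matrix.of fun i j => ∏ k, f k (i k) (j k)

lemma kron_submatrix_comp_perm (f : Fin N → Matrix (Fin 2) (Fin 2) ℂ) (σ : Equiv.Perm (Fin N)) :
    (kron N f).submatrix (· ∘ σ) (· ∘ σ) = kron N (f ∘ σ.symm) := by
  ext i j
  exact Fintype.prod_equiv σ _ _ fun k => by simp

lemma restrSym_kron_comp_perm (f : Fin N → Matrix (Fin 2) (Fin 2) ℂ) (σ : Equiv.Perm (Fin N)) :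
    restrSym N (kron N (f ∘ σ)) = restrSym N (kron N f) := by
  rw [← Equiv.symm_symm σ, ← kron_submatrix_comp_perm, restrSym_submatrix_comp_perm]

lemma restrSym_kron_eq_of_map_univ_eq {f g : Fin N → Matrix (Fin 2) (Fin 2) ℂ}
    (h : Finset.univ.val.map f = Finset.univ.val.map g) :
    restrSym N (kron N f) = restrSym N (kron N g) := by
  obtain ⟨σ, rfl⟩ := Equiv.Perm.exists_comp_eq_of_map_univ_eq h
  exact restrSym_kron_comp_perm g σ

lemma kron_apply_eq_mul_prod_compl (f : Fin N → Matrix (Fin 2) (Fin 2) ℂ) {p p' : Fin N}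
    (hp : p ≠ p') (i j : Fin N → Fin 2) :
    kron N f i j = f p (i p) (j p) * f p' (i p') (j p') * ∏ k ∈ {p, p'}ᶜ, f k (i k) (j k) := by
  rw [kron, Matrix.of_apply, ← Finset.prod_mul_prod_compl {p, p'}, Finset.prod_pair hp]

lemma sum_kron_update_pauli {f : Fin N → Matrix (Fin 2) (Fin 2) ℂ} {p p' : Fin N} (hp : p ≠ p')
    (hfp : f p = 1) (hfp' : f p' = 1) :
    ∑ j : Fin 3, kron N (Function.update (Function.update f p (pauli j)) p' (pauli j)) =
      (2 : ℂ) • (kron N f).submatrix id (· ∘ Equiv.swap p p') - kron N f := by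
  ext i m
  have hcompl : ∀ k ∈ ({p, p'} : Finset (Fin N))ᶜ, k ≠ p ∧ k ≠ p' := fun k hk => by
    simpa [not_or] using hk
  have hupd : ∀ j : Fin 3, ∏ k ∈ {p, p'}ᶜ,
      Function.update (Function.update f p (pauli j)) p' (pauli j) k (i k) (m k) =
        ∏ k ∈ {p, p'}ᶜ, f k (i k) (m k) := fun j => Finset.prod_congr rfl fun k hk => by
    rw [Function.update_of_ne (hcompl k hk).2, Function.update_of_ne (hcompl k hk).1]
  have hswap : ∏ k ∈ {p, p'}ᶜ, f k (i k) (m (Equiv.swap p p' k)) =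
      ∏ k ∈ {p, p'}ᶜ, f k (i k) (m k) := Finset.prod_congr rfl fun k hk => by
    rw [Equiv.swap_apply_of_ne_of_ne (hcompl k hk).1 (hcompl k hk).2]
  simp only [Matrix.sum_apply, Matrix.sub_apply, Matrix.smul_apply, Matrix.submatrix_apply, id,
    kron_apply_eq_mul_prod_compl _ hp, hfp, hfp', Function.comp_apply, Equiv.swap_apply_left,
    Equiv.swap_apply_right, Function.update_self, Function.update_of_ne hp, smul_eq_mul, hupd,
    hswap, ← Finset.sum_mul, sum_pauli_mul_pauli]
  ring

lemma sum_restrSym_kron_update_pauli {f : Fin N → Matrix (Fin 2) (Fin 2) ℂ} {p p' : Fin N}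
    (hp : p ≠ p') (hfp : f p = 1) (hfp' : f p' = 1) :
    ∑ j : Fin 3, restrSym N (kron N (Function.update (Function.update f p (pauli j)) p' (pauli j)))
      = restrSym N (kron N f) := by
  simp_rw [← restrSymₗ_apply]
  rw [← map_sum, sum_kron_update_pauli hp hfp hfp', map_sub, map_smul, restrSymₗ_apply,
    restrSym_submatrix_comp_perm_right, restrSymₗ_apply]
  module

end Kron

section Padding

variable {N : ℕ}

/-- Truncates `l` to its first `N` entries when `l` is longer than `N`. -/
def padOne (N : ℕ) (l : List (Matrix (Fin 2) (Fin 2) ℂ)) : Fin N → Matrix (Fin 2) (Fin 2) ℂ :=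
  fun k => l.getD k 1

lemma ofFn_padOne {l : List (Matrix (Fin 2) (Fin 2) ℂ)} (h : l.length ≤ N) :
    List.ofFn (padOne N l) = l ++ List.replicate (N - l.length) 1 := by
  refine List.ext_getElem (by simp; omega) fun k hk _ => ?_
  simp only [List.getElem_ofFn, padOne, List.getElem_append, List.getElem_replicate]
  split_ifs with hkl
  · exact List.getD_eq_getElem _ _ hkl
  · exact List.getD_eq_default _ _ (not_lt.mp hkl)

lemma restrSym_kron_padOne_perm {l l' : List (Matrix (Fin 2) (Fin 2) ℂ)} (h : l.length ≤ N)
    (hl : l.Perm l') : restrSym N (kron N (padOne N l)) = restrSym N (kron N (padOne N l')) := by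
  refine restrSym_kron_eq_of_map_univ_eq ?_
  rw [Fin.univ_val_map, Fin.univ_val_map, ofFn_padOne h, ofFn_padOne (hl.length_eq ▸ h),
    hl.length_eq, Multiset.coe_eq_coe]
  exact hl.append_right _

lemma embedMat_kron {L : ℕ} (h : L ≤ N) (f : Fin L → Matrix (Fin 2) (Fin 2) ℂ) :
    embedMat L N (kron L f) = kron N (padOne N (List.ofFn f)) := by
  obtain ⟨n, rfl⟩ := Nat.exists_eq_add_of_le h
  ext i j
  simp only [embedMat, le_add_iff_nonneg_right, zero_le, ↓reduceDIte, kron, Matrix.of_apply,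
    Finset.prod_filter, Fin.prod_univ_add, Fin.val_castAdd, Fin.val_natAdd, ↓reduceIte, padOne,
    List.getD_eq_getElem?_getD, List.getElem?_ofFn, Fin.is_lt, Fin.eta, Option.getD_some,
    add_lt_iff_neg_left, not_lt_zero, Option.getD_none, Matrix.one_apply]
  rw [Finset.prod_eq_one fun x _ => if_neg (not_le.mpr x.isLt), one_mul]
  rfl

lemma padOne_append_pair {l : List (Matrix (Fin 2) (Fin 2) ℂ)} (h : l.length + 2 ≤ N)
    (a : Matrix (Fin 2) (Fin 2) ℂ) :
    padOne N (l ++ [a, a]) = Function.update (Function.update (padOne N l)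
      ⟨l.length, by omega⟩ a) ⟨l.length + 1, by omega⟩ a := by
  funext k
  simp only [padOne, Function.update_apply, Fin.ext_iff]
  rcases lt_or_ge (k : ℕ) l.length with hk | hk
  · rw [List.getD_append _ _ _ _ hk, if_neg (by omega), if_neg (by omega)]
  · rw [List.getD_append_right _ _ _ _ hk, List.getD_eq_default _ _ hk]
    obtain ⟨t, ht⟩ := Nat.exists_eq_add_of_le hk
    rw [ht, Nat.add_sub_cancel_left]
    rcases t with _ | _ | t <;> simp

lemma sum_restrSym_kron_padOne_append_pauli {l : List (Matrix (Fin 2) (Fin 2) ℂ)}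
    (h : l.length + 2 ≤ N) :
    ∑ j : Fin 3, restrSym N (kron N (padOne N (l ++ [pauli j, pauli j]))) =
      restrSym N (kron N (padOne N l)) := by
  simp_rw [padOne_append_pair h]
  exact sum_restrSym_kron_update_pauli (by simp [Fin.ext_iff])
    (List.getD_eq_default _ _ le_rfl) (List.getD_eq_default _ _ (Nat.le_succ _))

end Padding

section Monomials

variable {N : ℕ}

lemma ofFn_monFun (d : Fin 3 →₀ ℕ) :
    List.ofFn (monFun d) =
      List.replicate (d 0) 0 ++ List.replicate (d 1) 1 ++ List.replicate (d 2) 2 := by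
  refine List.ext_getElem (by simp [add_assoc]) fun k hk _ => ?_
  simp only [List.getElem_ofFn, monFun, List.getElem_append, List.getElem_replicate,
    List.length_append, List.length_replicate]
  split_ifs <;> first | rfl | omega

lemma coe_ofFn_monFun (d : Fin 3 →₀ ℕ) :
    (List.ofFn (monFun d) : Multiset (Fin 3)) = Finsupp.toMultiset d := by
  ext j
  fin_cases j <;> simp [ofFn_monFun, List.count_replicate]

lemma ofFn_monFun_add_single_two_perm (d : Fin 3 →₀ ℕ) (j : Fin 3) :
    (List.ofFn (monFun (d + Finsupp.single j 2))).Perm (List.ofFn (monFun d) ++ [j, j]) := by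
  rw [← Multiset.coe_eq_coe, ← Multiset.coe_add, coe_ofFn_monFun, coe_ofFn_monFun,
    Finsupp.toMultiset_add, Finsupp.toMultiset_single]
  rfl

lemma restrSym_Qmon {d : Fin 3 →₀ ℕ} (h : d 0 + d 1 + d 2 ≤ N) :
    restrSym N (Qmon N d) = restrSym N (kron N (padOne N ((List.ofFn (monFun d)).map pauli))) := by
  rw [Qmon, SMN, restrSym_symmMat, List.map_ofFn]
  exact congrArg (restrSym N) (embedMat_kron h _)

lemma sum_restrSym_Qmon_add_single_two {d : Fin 3 →₀ ℕ} (h : d 0 + d 1 + d 2 + 2 ≤ N) :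
    ∑ j : Fin 3, restrSym N (Qmon N (d + Finsupp.single j 2)) = restrSym N (Qmon N d) := by
  set l := (List.ofFn (monFun d)).map pauli
  have hdeg : ∀ j : Fin 3, (d + Finsupp.single j 2 : Fin 3 →₀ ℕ) 0 +
      (d + Finsupp.single j 2 : Fin 3 →₀ ℕ) 1 + (d + Finsupp.single j 2 : Fin 3 →₀ ℕ) 2 =
        d 0 + d 1 + d 2 + 2 := by
    intro j
    fin_cases j <;> simp <;> omega
  calc ∑ j : Fin 3, restrSym N (Qmon N (d + Finsupp.single j 2))
      = ∑ j : Fin 3, restrSym N (kron N (padOne N (l ++ [pauli j, pauli j]))) := by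
        refine Finset.sum_congr rfl fun j _ => ?_
        rw [restrSym_Qmon (hdeg j ▸ h)]
        refine restrSym_kron_padOne_perm
          (by rw [List.length_map, List.length_ofFn, hdeg j]; omega) ?_
        simpa [l] using (ofFn_monFun_add_single_two_perm d j).map pauli
    _ = restrSym N (kron N (padOne N l)) :=
        sum_restrSym_kron_padOne_append_pauli (by simpa [l] using h)
    _ = restrSym N (Qmon N d) := (restrSym_Qmon (by omega)).symm

def Qₗ (N : ℕ) : MvPolynomial (Fin 3) ℂ →ₗ[ℂ] TP N :=
  Finsupp.linearCombination ℂ (Qmon N) ∘ₗ (AddMonoidAlgebra.coeffLinearEquiv ℂ).toLinearMap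

@[simp] lemma Qₗ_apply (p : MvPolynomial (Fin 3) ℂ) : Qₗ N p = Q N p := rfl

lemma Q_monomial (d : Fin 3 →₀ ℕ) (c : ℂ) : Q N (MvPolynomial.monomial d c) = c • Qmon N d :=
  Finsupp.linearCombination_single ℂ c d

lemma monomial_mul_sphPoly (d : Fin 3 →₀ ℕ) (c : ℂ) :
    MvPolynomial.monomial d c * sphPoly =
      ∑ j : Fin 3, MvPolynomial.monomial (d + Finsupp.single j 2) c -
        MvPolynomial.monomial d c := by
  simp only [sphPoly, Fin.sum_univ_three, mul_sub, mul_add, mul_one,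
    MvPolynomial.X_pow_eq_monomial, MvPolynomial.monomial_mul]

lemma restrSym_Q_monomial_mul_sphPoly {d : Fin 3 →₀ ℕ} (c : ℂ) (h : d 0 + d 1 + d 2 + 2 ≤ N) :
    restrSym N (Q N (MvPolynomial.monomial d c * sphPoly)) = 0 := by
  rw [monomial_mul_sphPoly, ← Qₗ_apply, ← restrSymₗ_apply, map_sub, map_sum, map_sub, map_sum]
  simp only [Qₗ_apply, Q_monomial, map_smul, restrSymₗ_apply, ← Finset.smul_sum,
    sum_restrSym_Qmon_add_single_two h, sub_self]

lemma restrSym_Q_mul_sphPoly_eq_zero {q : MvPolynomial (Fin 3) ℂ} (h : q.totalDegree + 2 ≤ N) :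
    restrSym N (Q N (q * sphPoly)) = 0 := by
  rw [q.as_sum, Finset.sum_mul, ← Qₗ_apply, ← restrSymₗ_apply, map_sum, map_sum]
  refine Finset.sum_eq_zero fun d hd => restrSym_Q_monomial_mul_sphPoly _ ?_
  have hdeg := MvPolynomial.le_totalDegree hd
  rw [Finsupp.sum_fintype _ _ fun _ => rfl, Fin.sum_univ_three] at hdeg
  omega

end Monomials

/-- Proposition 2.7 of the paper: for every complex polynomial `q` in
three real variables, `‖ Q_{1/N}(q · (x²+y²+z²−1))|_{Sym^N(ℂ²)} ‖_N → 0` as `N → ∞`. -/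
theorem norm_restrSym_Q_mul_sphPoly_tendsto_zero (q : MvPolynomial (Fin 3) ℂ) :
    Tendsto (fun N : ℕ => ‖restrSym N (Q N (q * sphPoly))‖) atTop (𝓝 0) := by
  refine tendsto_const_nhds.congr' ?_
  filter_upwards [eventually_ge_atTop (q.totalDegree + 2)] with N hN
  rw [restrSym_Q_mul_sphPoly_eq_zero hN]
  exact (norm_zero (E := SymSub N →L[ℂ] SymSub N)).symm

end
end

section
/- Let N ≥ 2 and 0 ≤ k ≤ N. Then the Dicke vector |k, N−k⟩ is an eigenvector of S_{2,N}(σ₃⊗σ₃): S_{2,N}(σ₃⊗σ₃)|k, N−k⟩ = (((N−2k)² − N)/(N(N−1))) · |k, N−k⟩. -/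
open scoped ComplexConjugate
open MeasureTheory Filter Topology

noncomputable section

/-! `σ₃ ⊗ σ₃` is diagonal in the product basis, and padding by identities and symmetrizing
both preserve diagonality, so `S_{2,N}(σ₃ ⊗ σ₃)` is diagonal; at the basis vector `e_i` its
entry is the permutation average of `s(i(σ 0)) s(i(σ 1))`, with `s = ±1` the eigenvalues of
`σ₃`. Each ordered pair of distinct positions is reached by `(N-2)!` permutations, so the entry
is `((∑ s)² - N) / (N (N - 1))`, and `∑ s = N - 2k` on every `e_i` in the support of
`|k, N-k⟩`. -/
def spinSign (x : Fin 2) : ℂ := if x = 1 then -1 else 1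

lemma pauli_two_eq_diagonal : pauli 2 = Matrix.diagonal spinSign := by
  ext x y
  fin_cases x <;> fin_cases y <;> simp [pauli, spinSign]

lemma pauliTensor_const_two (L : ℕ) :
    pauliTensor (fun _ : Fin L => (2 : Fin 3)) =
      Matrix.diagonal fun i => ∏ k, spinSign (i k) := by
  ext i j
  simp [pauliTensor, pauli_two_eq_diagonal, Matrix.diagonal_apply, Finset.prod_ite_zero,
    funext_iff]

lemma embedMat_diagonal {M N : ℕ} (h : M ≤ N) (d : (Fin M → Fin 2) → ℂ) :
    embedMat M N (Matrix.diagonal d) =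
      Matrix.diagonal fun i => d fun k => i (Fin.castLE h k) := by
  ext i j
  rw [embedMat, dif_pos h, Matrix.of_apply, Matrix.diagonal_apply, Matrix.diagonal_apply]
  by_cases hij : i = j
  · subst hij
    simp
  · obtain ⟨t, ht⟩ := Function.ne_iff.mp hij
    rw [if_neg hij]
    by_cases htM : (t : ℕ) < M
    · have : (fun k => i (Fin.castLE h k)) ≠ fun k => j (Fin.castLE h k) :=
        fun hc => ht (congrFun hc ⟨t, htM⟩)
      rw [if_neg this, zero_mul]
    · refine mul_eq_zero_of_right _ (Finset.prod_eq_zero (i := t) ?_ (if_neg ht))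
      simpa using htM

lemma symmMat_diagonal (N : ℕ) (d : (Fin N → Fin 2) → ℂ) :
    symmMat N (Matrix.diagonal d) =
      Matrix.diagonal fun i => (N.factorial : ℂ)⁻¹ * ∑ σ : Equiv.Perm (Fin N), d (i ∘ σ) := by
  ext i j
  have hcomp (σ : Equiv.Perm (Fin N)) : i ∘ σ = j ∘ σ ↔ i = j :=
    σ.surjective.injective_comp_right.eq_iff
  by_cases hij : i = j
  · subst hij
    simp [symmMat, Matrix.sum_apply]
  · simp [symmMat, Matrix.sum_apply, Matrix.diagonal_apply, hcomp, hij]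

lemma sum_perm_apply_zero {R : Type*} [AddCommMonoid R] (n : ℕ) (f : Fin (n + 1) → R) :
    ∑ σ : Equiv.Perm (Fin (n + 1)), f (σ 0) = n.factorial • ∑ p, f p := by
  rw [← Equiv.sum_comp Equiv.Perm.decomposeFin.symm, Fintype.sum_prod_type]
  simp [Fintype.card_perm, Finset.smul_sum]

lemma sum_perm_mul_apply_zero_one {R : Type*} [CommRing R] (n : ℕ) (g : Fin (n + 2) → R) :
    ∑ σ : Equiv.Perm (Fin (n + 2)), g (σ 0) * g (σ 1) =
      n.factorial * ((∑ p, g p) ^ 2 - ∑ p, g p ^ 2) := by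
  have hrest (p : Fin (n + 2)) :
      ∑ e : Equiv.Perm (Fin (n + 1)), g (Equiv.swap 0 p (e 0).succ) =
        n.factorial * (∑ q, g q - g p) := by
    rw [sum_perm_apply_zero n fun q => g (Equiv.swap 0 p q.succ), nsmul_eq_mul]
    congr 1
    rw [eq_sub_iff_add_eq', ← Equiv.sum_comp (Equiv.swap 0 p) g,
      Fin.sum_univ_succ fun x => g (Equiv.swap 0 p x), Equiv.swap_apply_left]
  rw [← Equiv.sum_comp Equiv.Perm.decomposeFin.symm, Fintype.sum_prod_type]
  simp only [Equiv.Perm.decomposeFin_symm_apply_zero, Equiv.Perm.decomposeFin_symm_apply_one,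
    ← Finset.mul_sum, hrest]
  rw [sq, Finset.sum_mul, ← Finset.sum_sub_distrib, Finset.mul_sum]
  exact Finset.sum_congr rfl fun p _ => by ring

lemma spinSign_sq (x : Fin 2) : spinSign x ^ 2 = 1 := by
  fin_cases x <;> simp [spinSign]

lemma sum_spinSign {N : ℕ} (i : Fin N → Fin 2) :
    ∑ t, spinSign (i t) = N - 2 * (Finset.univ.filter fun t => i t = 1).card := by
  have hsign (x : Fin 2) : spinSign x = 1 - 2 * if x = 1 then 1 else 0 := by
    fin_cases x <;> norm_num [spinSign]
  rw [Finset.sum_congr rfl fun t _ => hsign (i t), Finset.sum_sub_distrib, ← Finset.mul_sum,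
    Finset.sum_boole]
  simp

lemma SMN_two_sigma3_sigma3_eq_diagonal {N : ℕ} (hN : 2 ≤ N) :
    SMN 2 N (pauliTensor fun _ : Fin 2 => (2 : Fin 3)) =
      Matrix.diagonal fun i => ((∑ t, spinSign (i t)) ^ 2 - N) / (N * (N - 1)) := by
  obtain ⟨n, rfl⟩ := Nat.exists_eq_add_of_le' hN
  rw [SMN, pauliTensor_const_two, embedMat_diagonal hN, symmMat_diagonal]
  congr 1
  funext i
  simp only [Fin.prod_univ_two, Function.comp_apply]
  have h0 : Fin.castLE hN 0 = 0 := rfl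
  have h1 : Fin.castLE hN 1 = 1 := rfl
  rw [h0, h1, sum_perm_mul_apply_zero_one n fun t => spinSign (i t)]
  simp only [spinSign_sq, Finset.sum_const, Finset.card_univ, Fintype.card_fin, nsmul_eq_mul,
    mul_one, Nat.factorial_succ]
  push_cast
  have hfac : (n.factorial : ℂ) ≠ 0 := Nat.cast_ne_zero.mpr n.factorial_ne_zero
  have hn1 : (n : ℂ) + 1 ≠ 0 := by norm_cast
  have hn2 : (n : ℂ) + 2 ≠ 0 := by norm_cast
  rw [show (n : ℂ) + 1 + 1 = n + 2 by ring, show (n : ℂ) + 2 - 1 = n + 1 by ring]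
  field_simp

theorem dicke_eigenvector_SMN_sigma3_sigma3_general (N k : ℕ) (hN : 2 ≤ N) :
    (SMN 2 N (pauliTensor fun _ : Fin 2 => (2 : Fin 3))).mulVec (dicke N k) =
      (((((N : ℝ) - 2 * k) ^ 2 - N) / (N * ((N : ℝ) - 1)) : ℝ) : ℂ) • dicke N k := by
  funext i
  rw [SMN_two_sigma3_sigma3_eq_diagonal hN, Matrix.mulVec_diagonal, Pi.smul_apply, smul_eq_mul]
  by_cases hcard : (Finset.univ.filter fun t => i t = 1).card = k
  · rw [sum_spinSign, hcard]
    push_cast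
    ring
  · simp [dicke, hcard]

/-- for `N ≥ 2` and `0 ≤ k ≤ N`, the Dicke vector `|k, N−k⟩` is an
eigenvector of `S_{2,N}(σ₃⊗σ₃)` with eigenvalue `((N−2k)² − N)/(N(N−1))`. -/
theorem dicke_eigenvector_SMN_sigma3_sigma3 (N k : ℕ) (hN : 2 ≤ N) (hk : k ≤ N) :
    (SMN 2 N (pauliTensor fun _ : Fin 2 => (2 : Fin 3))).mulVec (dicke N k) =
      (((((N : ℝ) - 2 * k) ^ 2 - N) / (N * ((N : ℝ) - 1)) : ℝ) : ℂ) • dicke N k :=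
  dicke_eigenvector_SMN_sigma3_sigma3_general N k hN

end
end
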